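/- Let p(z) = Σ_{j=0}^n a_j z^j be a complex polynomial of degree n that is at least a trinomial, let k be the smallest positive integer with a_{n-k} ≠ 0, and suppose k is also the smallest positive integer ℓ with a_{n-k-ℓ} ≠ 0 (i.e., ℓ = k, so a_{n-2k} ≠ 0). Define q_3(z) = (a_n z^{2k} − a_{n-k} z^k − a_{n-2k} + a_{n-k}^2 / a_n) p(z). Then ρ[q_3] ≤ ρ[p]. -/

import Mathlib

/-!
Write `q₃ = m p` with `m = aₙ z^{2k} - a_{n-k} z^k + c`, `c = a_{n-k}²/aₙ - a_{n-2k}`. The gaps of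
`p` below `aₙ` and `a_{n-k}` make the coefficients of `q₃` of degrees `n, …, n + 2k - 1` vanish, so
`q₃` has leading coefficient `aₙ²` and its lower coefficients are
`aₙ p_{j-2k} - a_{n-k} p_{j-k} + c p_j` with `j < n`. At `y = ρ[p]` the Cauchy equation of `p`,
split along the same gaps, bounds `∑_{j<n} |q_j| y^j` by
`|aₙ|² y^{n+2k} - y^n (|a_{n-k}|² + |a_{n-2k}||aₙ| - |c||aₙ|)`, and the last bracket is
nonnegative by the triangle inequality. So the Cauchy function of `q₃` is nonnegative at `ρ[p]`;
as `t ↦ t^{1-N} ∑_{j<N} |q_j| t^j` is antitone on `t > 0` while `t ↦ |aₙ|² t` is strictly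
increasing, this forces `ρ[q₃] ≤ ρ[p]`.
-/

open Polynomial

/-- The function whose unique positive root is the Cauchy radius of `q`. -/
noncomputable def cauchyFun (q : Polynomial ℂ) (x : ℝ) : ℝ :=
  ‖q.leadingCoeff‖ * x ^ q.natDegree
    - ∑ j ∈ Finset.range q.natDegree, ‖q.coeff j‖ * x ^ j

open Finset

noncomputable def normSum (f : ℂ[X]) (N : ℕ) (y : ℝ) : ℝ :=
  ∑ j ∈ range N, ‖f.coeff j‖ * y ^ j

theorem cauchyFun_eq_sub_normSum (f : ℂ[X]) (y : ℝ) :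
    cauchyFun f y = ‖f.leadingCoeff‖ * y ^ f.natDegree - normSum f f.natDegree y := rfl

namespace normSum

variable (f g : ℂ[X]) (N : ℕ) {y : ℝ}

theorem add_le (hy : 0 ≤ y) : normSum (f + g) N y ≤ normSum f N y + normSum g N y := by
  rw [normSum, normSum, normSum, ← sum_add_distrib]
  refine sum_le_sum fun j _ => ?_
  rw [coeff_add, ← add_mul]
  exact mul_le_mul_of_nonneg_right (norm_add_le _ _) (by positivity)

theorem sub_le (hy : 0 ≤ y) : normSum (f - g) N y ≤ normSum f N y + normSum g N y := by
  rw [normSum, normSum, normSum, ← sum_add_distrib]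
  refine sum_le_sum fun j _ => ?_
  rw [coeff_sub, ← add_mul]
  exact mul_le_mul_of_nonneg_right (norm_sub_le _ _) (by positivity)

theorem C_mul (a : ℂ) : normSum (C a * f) N y = ‖a‖ * normSum f N y := by
  simp only [normSum, coeff_C_mul, norm_mul, mul_sum, mul_assoc]

theorem X_pow_mul {m : ℕ} (hm : m ≤ N) :
    normSum (X ^ m * f) N y = y ^ m * normSum f (N - m) y := by
  obtain ⟨r, rfl⟩ := Nat.exists_eq_add_of_le hm
  rw [normSum, sum_range_add, sum_eq_zero fun j hj => ?_, zero_add, Nat.add_sub_cancel_left,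
    normSum, mul_sum]
  · refine sum_congr rfl fun j _ => ?_
    rw [coeff_X_pow_mul', if_pos (Nat.le_add_right m j), Nat.add_sub_cancel_left, pow_add]
    ring
  · rw [coeff_X_pow_mul', if_neg (by simpa using hj), norm_zero, zero_mul]

theorem eq_of_coeff_eq_zero {m : ℕ} (hm : m ≤ N)
    (hf : ∀ j, m ≤ j → j < N → f.coeff j = 0) : normSum f N y = normSum f m y := by
  obtain ⟨r, rfl⟩ := Nat.exists_eq_add_of_le hm
  have htail : ∑ j ∈ range r, ‖f.coeff (m + j)‖ * y ^ (m + j) = 0 :=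
    sum_eq_zero fun j hj => by
      rw [hf (m + j) (by omega) (by simpa using hj), norm_zero, zero_mul]
  rw [normSum, sum_range_add, htail, add_zero, normSum]

theorem eq_of_gap {m : ℕ} (hm : m < N) (hf : ∀ j, m < j → j < N → f.coeff j = 0) :
    normSum f N y = normSum f m y + ‖f.coeff m‖ * y ^ m := by
  rw [eq_of_coeff_eq_zero f N hm hf, normSum, sum_range_succ]
  rfl

/-- That is, `t ↦ normSum f (N + 1) t / t ^ N` is antitone on `t > 0`. -/
theorem mul_pow_le {x : ℝ} (hy : 0 ≤ y) (hyx : y ≤ x) :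
    normSum f (N + 1) x * y ^ N ≤ normSum f (N + 1) y * x ^ N := by
  rw [normSum, normSum, sum_mul, sum_mul]
  refine sum_le_sum fun j hj => ?_
  obtain ⟨i, rfl⟩ := Nat.exists_eq_add_of_le (Nat.lt_succ_iff.mp (mem_range.mp hj))
  calc ‖f.coeff j‖ * x ^ j * y ^ (j + i) = ‖f.coeff j‖ * (x ^ j * y ^ j) * y ^ i := by ring
    _ ≤ ‖f.coeff j‖ * (x ^ j * y ^ j) * x ^ i := by
      have := hy.trans hyx
      gcongr
    _ = ‖f.coeff j‖ * y ^ j * x ^ (j + i) := by ring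

end normSum

theorem le_of_cauchyFun_eq_zero {q : ℂ[X]} (hq : q ≠ 0) {x y : ℝ} (hy : 0 < y)
    (hqx : cauchyFun q x = 0) (hqy : 0 ≤ cauchyFun q y) : x ≤ y := by
  rcases le_total x y with hxy | hyx
  · exact hxy
  have hx : 0 < x := hy.trans_le hyx
  have hL : 0 < ‖q.leadingCoeff‖ := norm_pos_iff.mpr (leadingCoeff_ne_zero.mpr hq)
  rw [cauchyFun_eq_sub_normSum] at hqx hqy
  obtain ⟨N, hN⟩ : ∃ N, q.natDegree = N + 1 := by
    refine Nat.exists_eq_succ_of_ne_zero fun h => hL.ne' ?_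
    simpa [h, normSum] using hqx
  rw [hN] at hqx hqy
  set L := ‖q.leadingCoeff‖
  have key : x * (L * (x * y) ^ N) ≤ y * (L * (x * y) ^ N) := by
    calc x * (L * (x * y) ^ N) = L * x ^ (N + 1) * y ^ N := by ring
      _ = normSum q (N + 1) x * y ^ N := by rw [← sub_eq_zero.mp hqx]
      _ ≤ normSum q (N + 1) y * x ^ N := normSum.mul_pow_le q N hy.le hyx
      _ ≤ L * y ^ (N + 1) * x ^ N := by gcongr; linarith
      _ = y * (L * (x * y) ^ N) := by ring
  exact le_of_mul_le_mul_right key (by positivity)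

/-- The cofactor of `p` in `q₃`. -/
noncomputable def cancellingMultiplier (p : ℂ[X]) (n k : ℕ) : ℂ[X] :=
  C (p.coeff n) * X ^ (2 * k) - C (p.coeff (n - k)) * X ^ k
    - C (p.coeff (n - 2 * k)) + C (p.coeff (n - k) ^ 2 / p.coeff n)

namespace cancellingMultiplier

variable {p : ℂ[X]} {n k : ℕ}

theorem mul_eq (p : ℂ[X]) (n k : ℕ) :
    cancellingMultiplier p n k * p = C (p.coeff n) * (X ^ (2 * k) * p)
      - C (p.coeff (n - k)) * (X ^ k * p)
      + C (p.coeff (n - k) ^ 2 / p.coeff n - p.coeff (n - 2 * k)) * p := by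
  rw [cancellingMultiplier, C_sub]
  ring

theorem coeff_mul (p : ℂ[X]) (n k j : ℕ) :
    (cancellingMultiplier p n k * p).coeff j
      = p.coeff n * (if 2 * k ≤ j then p.coeff (j - 2 * k) else 0)
        - p.coeff (n - k) * (if k ≤ j then p.coeff (j - k) else 0)
        + (p.coeff (n - k) ^ 2 / p.coeff n - p.coeff (n - 2 * k)) * p.coeff j := by
  rw [mul_eq]
  simp only [coeff_add, coeff_sub, coeff_C_mul, coeff_X_pow_mul']

theorem coeff_mul_top (hn : p.natDegree = n) (hk : 0 < k) :
    (cancellingMultiplier p n k * p).coeff (n + 2 * k) = p.coeff n ^ 2 := by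
  have hz : ∀ i, n < i → p.coeff i = 0 := fun i hi =>
    coeff_eq_zero_of_natDegree_lt (hn ▸ hi)
  rw [coeff_mul, if_pos le_add_self, if_pos (by omega), Nat.add_sub_cancel,
    hz (n + 2 * k - k) (by omega), hz (n + 2 * k) (by omega)]
  ring

variable (ha : p.coeff n ≠ 0) (hn : p.natDegree = n) (hkl : 2 * k ≤ n)
  (hkmin : ∀ j, 0 < j → j < k → p.coeff (n - j) = 0)
  (hlmin : ∀ j, 0 < j → j < k → p.coeff (n - k - j) = 0)
include ha hn hkl hkmin hlmin

theorem coeff_mul_eq_zero {j : ℕ} (hnj : n ≤ j) (hj : j ≠ n + 2 * k) :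
    (cancellingMultiplier p n k * p).coeff j = 0 := by
  have hz : ∀ i, n < i → p.coeff i = 0 := fun i hi =>
    coeff_eq_zero_of_natDegree_lt (hn ▸ hi)
  obtain ⟨i, rfl⟩ := Nat.exists_eq_add_of_le hnj
  rw [coeff_mul]
  rcases Nat.eq_zero_or_pos i with rfl | hi0
  · rw [if_pos (by omega), if_pos (by omega), Nat.add_zero]
    field_simp
    ring
  rw [hz (n + i) (by omega), mul_zero, add_zero]
  rcases lt_or_gt_of_ne hj with hi | hi
  · rcases lt_trichotomy i k with hik | rfl | hik
    · rw [if_pos (by omega), if_pos (by omega), show n + i - 2 * k = n - k - (k - i) by omega,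
        show n + i - k = n - (k - i) by omega, hlmin (k - i) (by omega) (by omega),
        hkmin (k - i) (by omega) (by omega)]
      ring
    · rw [if_pos (by omega), if_pos le_add_self, Nat.add_sub_cancel,
        show n + i - 2 * i = n - i by omega]
      ring
    · rw [if_pos (by omega), if_pos (by omega), show n + i - 2 * k = n - (2 * k - i) by omega,
        hkmin (2 * k - i) (by omega) (by omega), hz (n + i - k) (by omega)]
      ring
  · rw [if_pos (by omega), if_pos (by omega), hz (n + i - 2 * k) (by omega),
      hz (n + i - k) (by omega)]
    ring

theorem natDegree_mul (hk : 0 < k) : (cancellingMultiplier p n k * p).natDegree = n + 2 * k := by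
  refine natDegree_eq_of_le_of_coeff_ne_zero ?_ ?_
  · exact natDegree_le_iff_coeff_eq_zero.mpr fun j hj =>
      coeff_mul_eq_zero ha hn hkl hkmin hlmin (by omega) (by omega)
  · rw [coeff_mul_top hn hk]
    exact pow_ne_zero 2 ha

theorem leadingCoeff_mul (hk : 0 < k) :
    (cancellingMultiplier p n k * p).leadingCoeff = p.coeff n ^ 2 := by
  rw [leadingCoeff, natDegree_mul ha hn hkl hkmin hlmin hk, coeff_mul_top hn hk]

end cancellingMultiplier

theorem normSum_cancellingMultiplier_mul_le {p : ℂ[X]} {n k : ℕ} (hkl : 2 * k ≤ n) {y : ℝ}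
    (hy : 0 ≤ y) :
    normSum (cancellingMultiplier p n k * p) n y
      ≤ ‖p.coeff n‖ * (y ^ (2 * k) * normSum p (n - 2 * k) y)
        + ‖p.coeff (n - k)‖ * (y ^ k * normSum p (n - k) y)
        + ‖p.coeff (n - k) ^ 2 / p.coeff n - p.coeff (n - 2 * k)‖ * normSum p n y := by
  rw [← normSum.X_pow_mul p n hkl, ← normSum.X_pow_mul p n (by omega : k ≤ n),
    ← normSum.C_mul, ← normSum.C_mul, ← normSum.C_mul, cancellingMultiplier.mul_eq]
  refine (normSum.add_le _ _ _ hy).trans ?_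
  gcongr
  exact normSum.sub_le _ _ _ hy

theorem norm_sq_div_sub_mul_norm_le {𝕜 : Type*} [NormedField 𝕜] (a b d : 𝕜) :
    ‖b ^ 2 / a - d‖ * ‖a‖ ≤ ‖b‖ ^ 2 + ‖d‖ * ‖a‖ := by
  rcases eq_or_ne a 0 with rfl | ha
  · simp
  calc ‖b ^ 2 / a - d‖ * ‖a‖ = ‖b ^ 2 - d * a‖ := by
        rw [← norm_mul, sub_mul, div_mul_cancel₀ _ ha]
    _ ≤ ‖b ^ 2‖ + ‖d * a‖ := norm_sub_le _ _
    _ = ‖b‖ ^ 2 + ‖d‖ * ‖a‖ := by rw [norm_pow, norm_mul]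

theorem cauchyFun_cancellingMultiplier_mul_nonneg {p : ℂ[X]} {n k : ℕ} (ha : p.coeff n ≠ 0)
    (hn : p.natDegree = n) (hk : 0 < k) (hkl : 2 * k ≤ n)
    (hkmin : ∀ j, 0 < j → j < k → p.coeff (n - j) = 0)
    (hlmin : ∀ j, 0 < j → j < k → p.coeff (n - k - j) = 0)
    {y : ℝ} (hy : 0 ≤ y) (hyroot : cauchyFun p y = 0) :
    0 ≤ cauchyFun (cancellingMultiplier p n k * p) y := by
  have hS0 : normSum p n y = ‖p.coeff n‖ * y ^ n := by
    rw [cauchyFun_eq_sub_normSum, ← coeff_natDegree, hn] at hyroot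
    linarith
  have hS1 := normSum.eq_of_gap p n (m := n - k) (y := y) (by omega) fun j hj hjn => by
    simpa [show n - (n - j) = j by omega] using hkmin (n - j) (by omega) (by omega)
  have hS2 := normSum.eq_of_gap p (n - k) (m := n - 2 * k) (y := y) (by omega) fun j hj hjn => by
    simpa [show n - k - (n - k - j) = j by omega] using hlmin (n - k - j) (by omega) (by omega)
  have hc := norm_sq_div_sub_mul_norm_le (p.coeff n) (p.coeff (n - k)) (p.coeff (n - 2 * k))
  have hq := normSum_cancellingMultiplier_mul_le (p := p) hkl hy
  rw [cauchyFun_eq_sub_normSum, cancellingMultiplier.natDegree_mul ha hn hkl hkmin hlmin hk,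
    cancellingMultiplier.leadingCoeff_mul ha hn hkl hkmin hlmin hk, norm_pow,
    normSum.eq_of_coeff_eq_zero _ _ (Nat.le_add_right n (2 * k)) fun j hnj hj =>
      cancellingMultiplier.coeff_mul_eq_zero ha hn hkl hkmin hlmin hnj hj.ne]
  obtain ⟨m, rfl⟩ := Nat.exists_eq_add_of_le' hkl
  simp only [show m + 2 * k - k = m + k by omega, Nat.add_sub_cancel] at hS1 hS2 hq hc
  set A := ‖p.coeff (m + 2 * k)‖
  set B := ‖p.coeff (m + k)‖
  set D := ‖p.coeff m‖
  set c := ‖p.coeff (m + k) ^ 2 / p.coeff (m + 2 * k) - p.coeff m‖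
  have hbound : A * (y ^ (2 * k) * normSum p m y) + B * (y ^ k * normSum p (m + k) y)
        + c * normSum p (m + 2 * k) y
      = A ^ 2 * y ^ (m + 2 * k + 2 * k) - y ^ m * (y ^ k) ^ 2 * (B ^ 2 + D * A - c * A) := by
    linear_combination (A * (y ^ k) ^ 2 + B * y ^ k + c) * hS0
      - (A * (y ^ k) ^ 2 + B * y ^ k) * hS1 - A * (y ^ k) ^ 2 * hS2
  have hslack : 0 ≤ y ^ m * (y ^ k) ^ 2 * (B ^ 2 + D * A - c * A) :=
    mul_nonneg (by positivity) (sub_nonneg.mpr hc)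
  linarith

theorem improved_cauchy_radius_q3_general
    (p : Polynomial ℂ) (n : ℕ) (hp : p ≠ 0) (hn : p.natDegree = n)
    (k : ℕ) (hk : 0 < k) (hkl : 2 * k ≤ n)
    (hkmin : ∀ j, 0 < j → j < k → p.coeff (n - j) = 0)
    (hlmin : ∀ j, 0 < j → j < k → p.coeff (n - k - j) = 0)
    (x y : ℝ) (hy : 0 < y)
    (hxroot : cauchyFun
      ((C (p.coeff n) * X ^ (2 * k) - C (p.coeff (n - k)) * X ^ k
          - C (p.coeff (n - 2 * k)) + C (p.coeff (n - k) ^ 2 / p.coeff n)) * p) x = 0)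
    (hyroot : cauchyFun p y = 0) :
    x ≤ y := by
  have ha : p.coeff n ≠ 0 := hn ▸ leadingCoeff_ne_zero.mpr hp
  have hq : cancellingMultiplier p n k * p ≠ 0 := by
    rw [← leadingCoeff_ne_zero, cancellingMultiplier.leadingCoeff_mul ha hn hkl hkmin hlmin hk]
    exact pow_ne_zero 2 ha
  exact le_of_cauchyFun_eq_zero hq hy hxroot
    (cauchyFun_cancellingMultiplier_mul_nonneg ha hn hk hkl hkmin hlmin hy.le hyroot)

/-- Case `ℓ = k`: for the multiplier `aₙ z^{2k} - a_{n-k} z^k - a_{n-2k} + a_{n-k}²/aₙ`,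
the Cauchy radius of `q₃` is at most that of `p`. -/
theorem improved_cauchy_radius_q3
    (p : Polynomial ℂ) (n : ℕ) (hp : p ≠ 0) (hn : p.natDegree = n)
    (k : ℕ) (hk : 0 < k) (hkl : 2 * k ≤ n)
    (hknz : p.coeff (n - k) ≠ 0)
    (hkmin : ∀ j, 0 < j → j < k → p.coeff (n - j) = 0)
    (hlnz : p.coeff (n - 2 * k) ≠ 0)
    (hlmin : ∀ j, 0 < j → j < k → p.coeff (n - k - j) = 0)
    (x y : ℝ) (hx : 0 < x) (hy : 0 < y)
    (hxroot : cauchyFun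
      ((C (p.coeff n) * X ^ (2 * k) - C (p.coeff (n - k)) * X ^ k
          - C (p.coeff (n - 2 * k)) + C (p.coeff (n - k) ^ 2 / p.coeff n)) * p) x = 0)
    (hyroot : cauchyFun p y = 0) :
    x ≤ y :=
  improved_cauchy_radius_q3_general p n hp hn k hk hkl hkmin hlmin x y hy hxroot hyroot
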